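/- Let λ be a partition of n with all parts of size at least m+1, let C_λ be the corresponding conjugacy class of S_n, and let K be a permutation constraint of size m on {1,…,n}. If K is acyclic, then #{ω ∈ C_λ : ω satisfies K} · (n−1)(n−2)⋯(n−m) = |C_λ|, i.e., the probability that a uniformly random ω ∈ C_λ satisfies K equals 1/((n−1)(n−2)⋯(n−m)). If K is not acyclic, then no ω ∈ C_λ satisfies K. -/

import Mathlib

/-- The conjugacy class of `S_n` consisting of permutations of cycle type `lam`
(Mathlib's `cycleType` omits fixed points, so we compare with the parts of `lam` not equal
to `1`). -/
noncomputable def conjClass (n : ℕ) (lam : n.Partition) : Finset (Equiv.Perm (Fin n)) :=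
  Finset.univ.filter fun ω => ω.cycleType = Multiset.filter (fun i => i ≠ 1) lam.parts

/-- A constraint is well-defined if the first coordinates of its pairs are pairwise
distinct and the second coordinates are pairwise distinct. -/
def WellDefinedConstraint {n : ℕ} (K : Finset (Fin n × Fin n)) : Prop :=
  (∀ p ∈ K, ∀ q ∈ K, p.1 = q.1 → p = q) ∧ (∀ p ∈ K, ∀ q ∈ K, p.2 = q.2 → p = q)

/-- The successor of `t` in `Fin k`, computed modulo `k`. -/
def succMod {k : ℕ} (t : Fin k) : Fin k := ⟨((t : ℕ) + 1) % k, Nat.mod_lt _ t.pos⟩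

/-- A constraint is acyclic if it is well-defined and there is no sequence of distinct
elements `c_1, …, c_k` (`k ≥ 1`) with `(c_1,c_2), (c_2,c_3), …, (c_{k-1},c_k), (c_k,c_1)`
all in `K` (the successor index is taken cyclically in `Fin k`). -/
def AcyclicConstraint {n : ℕ} (K : Finset (Fin n × Fin n)) : Prop :=
  WellDefinedConstraint K ∧
    ¬ ∃ (k : ℕ), 0 < k ∧ ∃ c : Fin k → Fin n, Function.Injective c ∧
      ∀ t : Fin k, (c t, c (succMod t)) ∈ K

/-!
Read an acyclic `K` as the edge set `a → b` of disjoint directed paths. Remove an edge `(i, j)`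
whose head `j` starts no other edge, leaving `K'`, and sort the permutations satisfying `K'` by
`j' = ω i`. If `j'` already has a predecessor in `K'`, or is the start `s` of the path of `K'`
ending at `i` (closing a cycle of length at most `|K|`, shorter than every part of `λ`), no
permutation of cycle type `λ` qualifies. For each of the other `n - |K|` values, `K' ∪ {(i, j')}`
is acyclic: if `j'` is a vertex of `K'` it has fewer vertices than `K`, so induction on the
number of vertices gives its count, and otherwise it is conjugate to `K` by the transposition
`(j j')`. As the counts add up to that of `K'`, the count for `K` is forced to take the same
value `|C_λ| / ((n-1)⋯(n-|K|))`.
-/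

open Relation Function Finset

theorem eq_of_sum_eq_card_nsmul {ι M : Type*} [AddCommMonoid M] [LinearOrder M]
    [IsOrderedCancelAddMonoid M] {s : Finset ι} {f : ι → M} {a b : M}
    (hsum : ∑ i ∈ s, f i = s.card • a) (hf : ∀ i ∈ s, f i = a ∨ f i = b)
    (hb : ∃ i ∈ s, f i = b) : b = a := by
  obtain ⟨i₀, hi₀, hfi₀⟩ := hb
  rw [← sum_const] at hsum
  by_contra hne
  rcases lt_or_gt_of_ne hne with hlt | hlt
  · refine (sum_lt_sum (fun i hi => ?_) ⟨i₀, hi₀, hfi₀ ▸ hlt⟩).ne hsum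
    rcases hf i hi with h | h <;> rw [h]
    exact hlt.le
  · refine (sum_lt_sum (fun i hi => ?_) ⟨i₀, hi₀, hfi₀ ▸ hlt⟩).ne' hsum
    rcases hf i hi with h | h <;> rw [h]
    exact hlt.le

theorem wellFounded_of_irrefl_transGen {α : Type*} [Finite α] {r : α → α → Prop}
    (h : ∀ x, ¬ TransGen r x x) : WellFounded r :=
  haveI : Std.Irrefl (TransGen r) := ⟨h⟩
  Subrelation.wf TransGen.single (Finite.wellFounded_of_trans_of_irrefl _)

namespace PermConstraint

section Relation

variable {α : Type*} {K : Finset (α × α)}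

def Edge (K : Finset (α × α)) (a b : α) : Prop := (a, b) ∈ K

theorem edge_mono {K K' : Finset (α × α)} (h : K ⊆ K') : Edge K ≤ Edge K' :=
  fun _ _ hab => h hab

def IsCycleIn (K : Finset (α × α)) {k : ℕ} (c : Fin k → α) : Prop :=
  Injective c ∧ ∀ t, (c t, c (succMod t)) ∈ K

def HasCycle (K : Finset (α × α)) : Prop :=
  ∃ k, 0 < k ∧ ∃ c : Fin k → α, IsCycleIn K c

theorem IsCycleIn.card_le {k : ℕ} {c : Fin k → α} (hc : IsCycleIn K c) : k ≤ K.card := by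
  simpa using card_le_card_of_injOn (s := univ) (fun t => (c t, c (succMod t)))
    (fun t _ => hc.2 t) (fun a _ b _ h => hc.1 (congrArg Prod.fst h))

theorem IsCycleIn.transGen {k : ℕ} {c : Fin k → α} (hc : IsCycleIn K c) (hk : 0 < k) :
    TransGen (Edge K) (c ⟨0, hk⟩) (c ⟨0, hk⟩) := by
  have around : ∀ t : ℕ, TransGen (Edge K) (c ⟨0, hk⟩) (c ⟨(t + 1) % k, Nat.mod_lt _ hk⟩) := by
    intro t
    induction t with
    | zero => exact .single (hc.2 _)
    | succ t ih =>
      refine ih.tail ?_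
      have := hc.2 ⟨(t + 1) % k, Nat.mod_lt _ hk⟩
      simp only [succMod, Nat.mod_add_mod] at this
      exact this
  simpa [Nat.sub_add_cancel hk] using around (k - 1)

theorem exists_iterate_of_transGen {f : α → α} (hf : ∀ p ∈ K, f p.1 = p.2) {x y : α}
    (h : TransGen (Edge K) x y) :
    ∃ k, 0 < k ∧ f^[k] x = y ∧ ∀ t < k, (f^[t] x, f^[t + 1] x) ∈ K := by
  induction h with
  | single hxy =>
    refine ⟨1, one_pos, hf _ hxy, fun t ht => ?_⟩
    obtain rfl : t = 0 := by omega
    show (x, f x) ∈ K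
    rwa [hf _ hxy]
  | tail _ hzy ih =>
    obtain ⟨k, hk, rfl, hedges⟩ := ih
    refine ⟨k + 1, k.succ_pos, by rw [iterate_succ_apply', hf _ hzy], fun t ht => ?_⟩
    rcases Nat.lt_succ_iff_lt_or_eq.1 ht with ht | rfl
    · exact hedges t ht
    · rwa [iterate_succ_apply', hf _ hzy]

theorem isCycleIn_iterate {f : α → α} (hf : ∀ p ∈ K, f p.1 = p.2) {x : α}
    (h : TransGen (Edge K) x x) :
    0 < minimalPeriod f x ∧ IsCycleIn K fun t : Fin (minimalPeriod f x) => f^[t] x := by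
  obtain ⟨k, hk, hper, hedges⟩ := exists_iterate_of_transGen hf h
  have hper : IsPeriodicPt f k x := hper
  refine ⟨hper.minimalPeriod_pos hk,
    fun a b hab => Fin.ext (iterate_injOn_Iio_minimalPeriod a.2 b.2 hab), fun t => ?_⟩
  simpa [succMod, iterate_mod_minimalPeriod_eq] using
    hedges t (t.2.trans_le (hper.minimalPeriod_le hk))

theorem hasCycle_of_transGen (hK : ∀ p ∈ K, ∀ q ∈ K, p.1 = q.1 → p = q) {x : α}
    (h : TransGen (Edge K) x x) : HasCycle K := by
  classical
  let f : α → α := fun a => if ha : ∃ b, (a, b) ∈ K then ha.choose else a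
  have hf : ∀ p ∈ K, f p.1 = p.2 := fun p hp => by
    have ha : ∃ b, (p.1, b) ∈ K := ⟨p.2, hp⟩
    simpa [f, ha] using congrArg Prod.snd (hK _ ha.choose_spec p hp rfl)
  obtain ⟨hpos, hc⟩ := isCycleIn_iterate hf h
  exact ⟨_, hpos, _, hc⟩

variable [DecidableEq α]

def vertices (K : Finset (α × α)) : Finset α :=
  K.image Prod.fst ∪ K.image Prod.snd

theorem vertices_insert (K : Finset (α × α)) (a b : α) :
    vertices (insert (a, b) K) = insert a (insert b (vertices K)) := by
  ext x
  simp only [vertices, image_insert, mem_union, mem_insert]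
  tauto

theorem mem_insert_vertices_of_reflTransGen {s i : α} (h : ReflTransGen (Edge K) s i) :
    s ∈ insert i (vertices K) := by
  rcases h.cases_head with rfl | ⟨c, hsc, -⟩
  · exact mem_insert_self _ _
  · exact mem_insert_of_mem (mem_union_left _ (mem_image_of_mem Prod.fst hsc))

theorem card_vertices_lt_of_subset {L : Finset (α × α)} {i j : α}
    (hj : j ∉ insert i (vertices K)) (hL : vertices L ⊆ insert i (vertices K)) :
    (vertices L).card < (vertices (insert (i, j) K)).card := by
  refine card_lt_card (hL.trans_ssubset ?_)
  rw [vertices_insert, insert_comm]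
  exact ssubset_insert hj

theorem image_prodMap_eq_self {σ : Equiv.Perm α} (h : ∀ x ∈ vertices K, σ x = x) :
    K.image (Prod.map σ σ) = K := by
  refine (image_congr fun p hp => ?_).trans image_id
  simp only [vertices, mem_union, mem_image] at h
  exact Prod.ext (h _ (.inl ⟨p, hp, rfl⟩)) (h _ (.inr ⟨p, hp, rfl⟩))

theorem exists_terminal_edge [Finite α] (hK : ∀ x, ¬ TransGen (Edge K) x x)
    (hne : K.Nonempty) : ∃ p ∈ K, p.2 ∉ K.image Prod.fst := by
  have hwf : WellFounded (swap (Edge K)) :=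
    wellFounded_of_irrefl_transGen fun x hx => hK x (transGen_swap.1 hx)
  obtain ⟨_, hj, hmin⟩ := hwf.has_min (K.image Prod.snd : Set α) (hne.image Prod.snd)
  obtain ⟨p, hp, rfl⟩ := mem_image.1 hj
  refine ⟨p, hp, fun hp' => ?_⟩
  obtain ⟨q, hq, hqp⟩ := mem_image.1 hp'
  exact hmin q.2 (mem_image_of_mem Prod.snd hq) (by rw [← hqp]; exact hq)

theorem exists_start [Finite α] (hK : ∀ x, ¬ TransGen (Edge K) x x) (i : α) :
    ∃ s, s ∉ K.image Prod.snd ∧ ReflTransGen (Edge K) s i := by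
  obtain ⟨s, hsi, hmin⟩ := (wellFounded_of_irrefl_transGen hK).has_min
    {a | ReflTransGen (Edge K) a i} ⟨i, .refl⟩
  refine ⟨s, fun hs => ?_, hsi⟩
  obtain ⟨p, hp, rfl⟩ := mem_image.1 hs
  exact hmin p.1 (ReflTransGen.head hp hsi) hp

theorem eq_of_reflTransGen_of_notMem_snd (hK : ∀ p ∈ K, ∀ q ∈ K, p.2 = q.2 → p = q)
    {s s' i : α} (hs : s ∉ K.image Prod.snd) (hs' : s' ∉ K.image Prod.snd)
    (h : ReflTransGen (Edge K) s i) (h' : ReflTransGen (Edge K) s' i) : s = s' := by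
  have hU : Relator.RightUnique (swap (Edge K)) := fun _ _ _ hb hc =>
    congrArg Prod.fst (hK _ hb _ hc rfl)
  have of_start : ∀ {a b}, a ∉ K.image Prod.snd → ReflTransGen (Edge K) b a → a = b := by
    intro a b ha hba
    rcases hba.cases_tail with rfl | ⟨c, -, hca⟩
    · rfl
    · exact absurd (mem_image_of_mem Prod.snd hca) ha
  rcases (reflTransGen_swap.2 h).total_of_right_unique hU (reflTransGen_swap.2 h') with h'' | h''
  · exact of_start hs (reflTransGen_swap.1 h'')
  · exact (of_start hs' (reflTransGen_swap.1 h'')).symm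

theorem transGen_insert {a b x y : α} (h : TransGen (Edge (insert (a, b) K)) x y) :
    TransGen (Edge K) x y ∨ (ReflTransGen (Edge K) x a ∧ ReflTransGen (Edge K) b y) ∨
      ReflTransGen (Edge K) b a := by
  induction h with
  | single hxy =>
    rcases mem_insert.1 hxy with hxy | hxy
    · obtain ⟨rfl, rfl⟩ := Prod.mk.inj hxy
      exact .inr (.inl ⟨.refl, .refl⟩)
    · exact .inl (.single hxy)
  | tail _ hzy ih =>
    rcases mem_insert.1 hzy with hzy | hzy
    · obtain ⟨rfl, rfl⟩ := Prod.mk.inj hzy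
      rcases ih with ih | ⟨-, ih⟩ | ih
      · exact .inr (.inl ⟨ih.to_reflTransGen, .refl⟩)
      · exact .inr (.inr ih)
      · exact .inr (.inr ih)
    · rcases ih with ih | ⟨hxa, ih⟩ | ih
      · exact .inl (ih.tail hzy)
      · exact .inr (.inl ⟨hxa, ih.tail hzy⟩)
      · exact .inr (.inr ih)

theorem reflTransGen_of_transGen_insert {a b x : α}
    (h : TransGen (Edge (insert (a, b) K)) x x) (hK : ¬ TransGen (Edge K) x x) :
    ReflTransGen (Edge K) b a := by
  rcases transGen_insert h with h | ⟨hxa, hbx⟩ | h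
  · exact absurd h hK
  · exact hbx.trans hxa
  · exact h

end Relation

variable {n : ℕ}

section Constraint

variable {K : Finset (Fin n × Fin n)} {i j : Fin n}

theorem acyclicConstraint_iff :
    AcyclicConstraint K ↔ WellDefinedConstraint K ∧ ∀ x, ¬ TransGen (Edge K) x x :=
  and_congr_right fun hK => ⟨fun hc _ hx => hc (hasCycle_of_transGen hK.1 hx),
    fun h ⟨_, hk, _, hc⟩ => h _ (IsCycleIn.transGen hc hk)⟩

theorem _root_.AcyclicConstraint.mono {K' : Finset (Fin n × Fin n)} (hK : AcyclicConstraint K)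
    (h : K' ⊆ K) : AcyclicConstraint K' :=
  ⟨⟨fun p hp q hq => hK.1.1 p (h hp) q (h hq), fun p hp q hq => hK.1.2 p (h hp) q (h hq)⟩,
    fun ⟨k, hk, c, hc, hedges⟩ => hK.2 ⟨k, hk, c, hc, fun t => h (hedges t)⟩⟩

theorem wellDefinedConstraint_insert (hK : WellDefinedConstraint K)
    (hi : i ∉ K.image Prod.fst) (hj : j ∉ K.image Prod.snd) :
    WellDefinedConstraint (insert (i, j) K) := by
  have hij : (i, j) ∉ K := fun h => hi (mem_image_of_mem Prod.fst h)
  have extend : ∀ f : Fin n × Fin n → Fin n, Set.InjOn f K → f (i, j) ∉ K.image f →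
      Set.InjOn f ↑(insert (i, j) K) := fun f hf hfij => by
    rw [coe_insert, Set.injOn_insert (mem_coe.not.2 hij)]
    exact ⟨hf, by simpa using hfij⟩
  exact ⟨extend Prod.fst hK.1 hi, extend Prod.snd hK.2 hj⟩

theorem notMem_image_fst_erase (hK : WellDefinedConstraint K) (hij : (i, j) ∈ K) :
    i ∉ (K.erase (i, j)).image Prod.fst := fun h => by
  obtain ⟨q, hq, rfl⟩ := mem_image.1 h
  exact notMem_erase _ _ (hK.1 q (mem_of_mem_erase hq) _ hij rfl ▸ hq)

theorem notMem_insert_vertices_erase (hK : WellDefinedConstraint K) (hij : (i, j) ∈ K)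
    (hj : j ∉ K.image Prod.fst) : j ∉ insert i (vertices (K.erase (i, j))) := by
  simp only [mem_insert, vertices, mem_union, mem_image, not_or, not_exists, not_and]
  exact ⟨fun hji => hj (hji ▸ mem_image_of_mem Prod.fst hij),
    fun q hq hqj => hj (hqj ▸ mem_image_of_mem _ (mem_of_mem_erase hq)),
    fun q hq hqj => notMem_erase _ _ (hK.2 q (mem_of_mem_erase hq) _ hij hqj ▸ hq)⟩

end Constraint

noncomputable def satisfying (lam : n.Partition) (K : Finset (Fin n × Fin n)) :
    Finset (Equiv.Perm (Fin n)) :=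
  (conjClass n lam).filter fun ω => ∀ p ∈ K, ω p.1 = p.2

section Satisfying

variable {lam : n.Partition} {ω : Equiv.Perm (Fin n)} {K : Finset (Fin n × Fin n)}

theorem le_of_pow_apply_eq_self (hω : ω ∈ conjClass n lam) {M : ℕ}
    (hM : ∀ p ∈ lam.parts, M ≤ p) {k : ℕ} (hk : 0 < k) {x : Fin n} (hx : (ω ^ k) x = x) :
    M ≤ k := by
  have hct : ω.cycleType = lam.parts.filter (· ≠ 1) := (mem_filter.1 hω).2
  by_cases hfix : ω x = x
  · by_contra! hkM
    have hparts : lam.parts.filter (· ≠ 1) = lam.parts :=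
      Multiset.filter_eq_self.2 fun p hp => by have := hM p hp; omega
    have hsupp : ω.support = univ := eq_univ_of_card _ <| by
      rw [← ω.sum_cycleType, hct, hparts, lam.parts_sum, Fintype.card_fin]
    exact ω.mem_support.1 (hsupp ▸ mem_univ x) hfix
  · have hc := ω.isCycle_cycleOf hfix
    have hone : ω.cycleOf x ^ k = 1 := hc.pow_eq_one_iff.2
      ⟨x, by rwa [Equiv.Perm.cycleOf_apply_self], by rwa [Equiv.Perm.cycleOf_pow_apply_self]⟩
    have hmem : (ω.cycleOf x).support.card ∈ ω.cycleType :=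
      Multiset.mem_map_of_mem _ (Equiv.Perm.cycleOf_mem_cycleFactorsFinset_iff.2
        (ω.mem_support.2 hfix))
    calc M ≤ (ω.cycleOf x).support.card := hM _ (Multiset.mem_of_mem_filter (hct ▸ hmem))
      _ = orderOf (ω.cycleOf x) := hc.orderOf.symm
      _ ≤ k := Nat.le_of_dvd hk (orderOf_dvd_of_pow_eq_one hone)

theorem not_satisfies_of_transGen (hω : ω ∈ conjClass n lam)
    (hparts : ∀ p ∈ lam.parts, K.card + 1 ≤ p) {x : Fin n} (h : TransGen (Edge K) x x) :
    ¬ ∀ p ∈ K, ω p.1 = p.2 := fun hsat => by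
  obtain ⟨hpos, hc⟩ := isCycleIn_iterate hsat h
  have := le_of_pow_apply_eq_self hω hparts hpos
    (by rw [← Equiv.Perm.iterate_eq_pow]; exact iterate_minimalPeriod)
  have := hc.card_le
  omega

theorem wellDefinedConstraint_of_satisfies (h : ∀ p ∈ K, ω p.1 = p.2) :
    WellDefinedConstraint K :=
  ⟨fun p hp q hq h1 => Prod.ext h1 (by rw [← h p hp, ← h q hq, h1]),
    fun p hp q hq h2 => Prod.ext (ω.injective (by rw [h p hp, h q hq, h2])) h2⟩

theorem acyclicConstraint_of_satisfies (hω : ω ∈ conjClass n lam)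
    (hparts : ∀ p ∈ lam.parts, K.card + 1 ≤ p) (h : ∀ p ∈ K, ω p.1 = p.2) :
    AcyclicConstraint K :=
  ⟨wellDefinedConstraint_of_satisfies h,
    fun ⟨_, hk, _, hc⟩ => not_satisfies_of_transGen hω hparts (IsCycleIn.transGen hc hk) h⟩

theorem card_satisfying_image_perm (σ : Equiv.Perm (Fin n)) (K : Finset (Fin n × Fin n)) :
    (satisfying lam (K.image (Prod.map σ σ))).card = (satisfying lam K).card := by
  refine (card_equiv (MulAut.conj σ).toEquiv fun ω => ?_).symm
  simp only [satisfying, conjClass, mem_filter, mem_univ, true_and, forall_mem_image,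
    MulEquiv.toEquiv_eq_coe, MulEquiv.coe_toEquiv, MulAut.conj_apply, Equiv.Perm.cycleType_conj,
    Prod.map_fst, Prod.map_snd, Equiv.Perm.mul_apply, Equiv.Perm.coe_inv,
    Equiv.symm_apply_apply, EmbeddingLike.apply_eq_iff_eq]

theorem card_satisfying_insert_eq {i j j' : Fin n} (hj : j ∉ insert i (vertices K))
    (hj' : j' ∉ insert i (vertices K)) :
    (satisfying lam (insert (i, j) K)).card = (satisfying lam (insert (i, j') K)).card := by
  rw [← card_satisfying_image_perm (Equiv.swap j j'), image_insert, image_prodMap_eq_self]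
  · simp only [Prod.map, Equiv.swap_apply_left,
      Equiv.swap_apply_of_ne_of_ne (ne_of_mem_of_not_mem (mem_insert_self i _) hj)
        (ne_of_mem_of_not_mem (mem_insert_self i _) hj')]
  · exact fun x hx => Equiv.swap_apply_of_ne_of_ne
      (ne_of_mem_of_not_mem (mem_insert_of_mem hx) hj)
      (ne_of_mem_of_not_mem (mem_insert_of_mem hx) hj')

theorem card_satisfying_eq_sum (K : Finset (Fin n × Fin n)) (i : Fin n) :
    (satisfying lam K).card = ∑ j, (satisfying lam (insert (i, j) K)).card := by
  rw [card_eq_sum_card_fiberwise (f := fun ω : Equiv.Perm (Fin n) => ω i) (t := univ)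
    fun _ _ => mem_univ _]
  refine sum_congr rfl fun j _ => congrArg card ?_
  ext ω
  simp only [satisfying, mem_filter, forall_mem_insert]
  tauto

end Satisfying

section Extension

variable {lam : n.Partition} {K : Finset (Fin n × Fin n)} {i s : Fin n}

theorem acyclicConstraint_insert (hK : AcyclicConstraint K) (hi : i ∉ K.image Prod.fst)
    (hs : s ∉ K.image Prod.snd) (hsi : ReflTransGen (Edge K) s i) {j : Fin n}
    (hj : j ∉ insert s (K.image Prod.snd)) : AcyclicConstraint (insert (i, j) K) := by
  obtain ⟨hwd, hcyc⟩ := acyclicConstraint_iff.1 hK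
  rw [mem_insert, not_or] at hj
  refine acyclicConstraint_iff.2 ⟨wellDefinedConstraint_insert hwd hi hj.2, fun x hx => ?_⟩
  exact hj.1 (eq_of_reflTransGen_of_notMem_snd hwd.2 hj.2 hs
    (reflTransGen_of_transGen_insert hx (hcyc x)) hsi)

theorem satisfying_insert_eq_empty (hparts : ∀ p ∈ lam.parts, K.card + 2 ≤ p)
    (hi : i ∉ K.image Prod.fst) (hsi : ReflTransGen (Edge K) s i) {j : Fin n}
    (hj : j ∈ insert s (K.image Prod.snd)) : satisfying lam (insert (i, j) K) = ∅ := by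
  refine filter_eq_empty_iff.2 fun ω hω hsat => ?_
  obtain ⟨hwd, hcyc⟩ := acyclicConstraint_iff.1 <| acyclicConstraint_of_satisfies hω
    (fun p hp => (Nat.succ_le_succ (card_insert_le _ _)).trans (hparts p hp)) hsat
  rcases mem_insert.1 hj with rfl | hj
  · exact hcyc i (TransGen.head' (mem_insert_self _ _)
      (ReflTransGen.mono (edge_mono (subset_insert _ _)) _ _ hsi))
  · obtain ⟨q, hq, rfl⟩ := mem_image.1 hj
    have := hwd.2 _ (mem_insert_self _ _) q (mem_insert_of_mem hq) rfl
    exact hi (mem_image.2 ⟨q, hq, congrArg Prod.fst this.symm⟩)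

theorem card_satisfying_eq_sum_compl (hparts : ∀ p ∈ lam.parts, K.card + 2 ≤ p)
    (hi : i ∉ K.image Prod.fst) (hsi : ReflTransGen (Edge K) s i) :
    (satisfying lam K).card =
      ∑ j ∈ (insert s (K.image Prod.snd))ᶜ, (satisfying lam (insert (i, j) K)).card := by
  rw [card_satisfying_eq_sum K i, ← sum_compl_add_sum (insert s (K.image Prod.snd)),
    sum_eq_zero (s := insert s (K.image Prod.snd)) fun j hj => by
      rw [satisfying_insert_eq_empty hparts hi hsi hj, card_empty],
    add_zero]

theorem card_compl_insert_image_snd (hK : WellDefinedConstraint K)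
    (hs : s ∉ K.image Prod.snd) : (insert s (K.image Prod.snd))ᶜ.card = n - (K.card + 1) := by
  rw [card_compl, Fintype.card_fin, card_insert_of_notMem hs, card_image_of_injOn hK.2]

end Extension

theorem card_satisfying_mul_prod {lam : n.Partition} (K : Finset (Fin n × Fin n))
    (hK : AcyclicConstraint K) (hparts : ∀ p ∈ lam.parts, K.card + 1 ≤ p) :
    (satisfying lam K).card * ∏ t ∈ Icc 1 K.card, (n - t) = (conjClass n lam).card := by
  obtain rfl | hne := K.eq_empty_or_nonempty
  · simp [satisfying]
  obtain ⟨hwd, hcyc⟩ := acyclicConstraint_iff.1 hK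
  obtain ⟨⟨i, j⟩, hij, hj⟩ := exists_terminal_edge hcyc hne
  set K' := K.erase (i, j)
  have hins : insert (i, j) K' = K := insert_erase hij
  have hcard : K'.card + 1 = K.card := card_erase_add_one hij
  have hK' : AcyclicConstraint K' := hK.mono (erase_subset _ _)
  have hi : i ∉ K'.image Prod.fst := notMem_image_fst_erase hwd hij
  have hjV : j ∉ insert i (vertices K') := notMem_insert_vertices_erase hwd hij hj
  obtain ⟨s, hs, hsi⟩ := exists_start (acyclicConstraint_iff.1 hK').2 i
  have IH' := card_satisfying_mul_prod K' hK' fun p hp => by have := hparts p hp; omega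
  refine eq_of_sum_eq_card_nsmul (s := (insert s (K'.image Prod.snd))ᶜ)
    (f := fun j' => (satisfying lam (insert (i, j') K')).card * ∏ t ∈ Icc 1 K.card, (n - t))
    ?_ (fun j' hj' => ?_) ⟨j, ?_, by rw [hins]⟩
  · rw [smul_eq_mul, ← sum_mul, ← card_satisfying_eq_sum_compl
      (fun p hp => by have := hparts p hp; omega) hi hsi, card_compl_insert_image_snd hK'.1 hs,
      ← hcard, prod_Icc_succ_top (by omega), ← mul_assoc, IH', mul_comm]
  · by_cases hv : j' ∈ insert i (vertices K')
    · have hcard' : (insert (i, j') K').card = K.card := by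
        rw [card_insert_of_notMem fun h => hi (mem_image_of_mem _ h), hcard]
      have IH := card_satisfying_mul_prod (insert (i, j') K')
        (acyclicConstraint_insert hK' hi hs hsi (mem_compl.1 hj')) (hcard' ▸ hparts)
      exact .inl (hcard' ▸ IH)
    · exact .inr (by rw [← card_satisfying_insert_eq hjV hv, hins])
  · refine mem_compl.2 fun h => hjV ?_
    rcases mem_insert.1 h with rfl | h
    · exact mem_insert_vertices_of_reflTransGen hsi
    · exact mem_insert_of_mem (mem_union_right _ h)
termination_by (vertices K).card
decreasing_by
  all_goals refine (card_vertices_lt_of_subset hjV ?_).trans_eq (by rw [hins])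
  · exact subset_insert _ _
  · rw [vertices_insert]
    exact insert_subset (mem_insert_self _ _) (insert_subset hv (subset_insert _ _))

end PermConstraint

theorem stmt16 (n m : ℕ) (lam : n.Partition) (hparts : ∀ p ∈ lam.parts, m + 1 ≤ p)
    (K : Finset (Fin n × Fin n)) (hm : K.card = m) :
    (AcyclicConstraint K →
      ((conjClass n lam).filter fun ω => ∀ p ∈ K, ω p.1 = p.2).card
          * ∏ t ∈ Finset.Icc 1 m, (n - t)
        = (conjClass n lam).card) ∧
    (¬ AcyclicConstraint K →
      ∀ ω ∈ conjClass n lam, ¬ (∀ p ∈ K, ω p.1 = p.2)) := by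
  subst hm
  exact ⟨fun hK => PermConstraint.card_satisfying_mul_prod K hK hparts,
    fun hK _ hω hsat => hK (PermConstraint.acyclicConstraint_of_satisfies hω hparts hsat)⟩
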